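/- arXiv:2507.07528 — 2 statements merged into one kernel-verified Lean document; each statement's English description precedes it below -/
import Mathlib

section
/- Let φ = C_1 ∧ … ∧ C_m be a 3-CNF formula over variables x_1,…,x_n, let D_φ be the separator-reduction directed hypergraph constructed from φ, and let 𝒳(φ) = {{c}} ∪ {{y_i} : 1 ≤ i ≤ n} ∪ {{x_i, x̄_i} : 1 ≤ i ≤ n}. Then φ has a satisfying assignment if and only if D_φ has a minimal s-t separator that is not a member of 𝒳(φ). -/
/-- B-connection from a vertex `src` in a directed hypergraph with hyperarc set `𝒜`:
`src` is B-connected from `src`, and if all tails of a hyperarc are B-connected from `src`,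
then every head of that hyperarc is B-connected from `src`. -/
inductive BConn {V : Type*} (𝒜 : Set (Set V × Set V)) (src : V) : V → Prop
  | base : BConn 𝒜 src src
  | step (A : Set V × Set V) (hA : A ∈ 𝒜)
      (hT : ∀ u ∈ A.1, BConn 𝒜 src u) {v : V} (hv : v ∈ A.2) : BConn 𝒜 src v

/-- Hyperarcs of the induced subhypergraph `D[U]`. -/
def inducedArcs {V : Type*} (𝒜 : Set (Set V × Set V)) (U : Set V) :
    Set (Set V × Set V) :=
  {A ∈ 𝒜 | A.1 ⊆ U ∧ A.2 ⊆ U}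

/-- `X ⊆ V \ {src, tgt}` is an `src`-`tgt` separator if `tgt` is not B-connected from `src`
in `D[V \ X]`. -/
def IsSeparator {V : Type*} (𝒜 : Set (Set V × Set V)) (src tgt : V) (X : Set V) : Prop :=
  src ∉ X ∧ tgt ∉ X ∧ ¬ BConn (inducedArcs 𝒜 (Set.univ \ X)) src tgt

/-- A minimal `src`-`tgt` separator: a separator no proper subset of which is a separator. -/
def IsMinSeparator {V : Type*} (𝒜 : Set (Set V × Set V)) (src tgt : V) (X : Set V) : Prop :=
  IsSeparator 𝒜 src tgt X ∧ ∀ Y, Y ⊂ X → ¬ IsSeparator 𝒜 src tgt Y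

/-- Vertices of the separator-reduction directed hypergraph `D_φ` built from a 3-CNF
formula with `n` variables. -/
inductive SVtx (n : ℕ) : Type
  | s : SVtx n
  | t : SVtx n
  | c : SVtx n
  | pos : Fin n → SVtx n      -- the vertex `x_i`
  | neg : Fin n → SVtx n      -- the vertex `x̄_i`
  | y : Fin n → SVtx n        -- the vertex `y_i`

/-- A 3-CNF formula with `n` variables and `m` clauses: clause `j` consists of three
literals, a literal being a variable index together with a sign (`true` = positive). -/
abbrev CNF3 (n m : ℕ) := Fin m → Fin 3 → Fin n × Bool

/-- `α` satisfies the 3-CNF formula `φ`. -/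
def Satisfies {n m : ℕ} (α : Fin n → Bool) (φ : CNF3 n m) : Prop :=
  ∀ j : Fin m, ∃ k : Fin 3, α (φ j k).1 = (φ j k).2

/-- The vertex of the complementary literal: `x̄_i` for the literal `x_i`, and `x_i` for
the literal `¬x_i`. -/
def barVtx {n : ℕ} (ℓ : Fin n × Bool) : SVtx n :=
  cond ℓ.2 (SVtx.neg ℓ.1) (SVtx.pos ℓ.1)

/-- The hyperarcs of the separator-reduction directed hypergraph `D_φ`. -/
def DsepPhi {n m : ℕ} (φ : CNF3 n m) : Set (Set (SVtx n) × Set (SVtx n)) :=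
  {A | (∃ i : Fin n, A = ({SVtx.pos i}, {SVtx.y i}))
     ∨ (∃ i : Fin n, A = ({SVtx.neg i}, {SVtx.y i}))
     ∨ (∃ i : Fin n, A = ({SVtx.s}, {SVtx.pos i}))
     ∨ (∃ i : Fin n, A = ({SVtx.s}, {SVtx.neg i}))
     ∨ (∃ j : Fin m,
          A = ({barVtx (φ j 0), barVtx (φ j 1), barVtx (φ j 2)}, {SVtx.c}))
     ∨ A = (insert SVtx.c {v | ∃ i : Fin n, v = SVtx.y i}, {SVtx.t})}

/-- The family `𝒳(φ)` of trivial minimal separators: `{c}`, the `{y_i}`, and the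
`{x_i, x̄_i}`. -/
def Xcal (n : ℕ) : Set (Set (SVtx n)) :=
  {X | X = {SVtx.c} ∨ (∃ i : Fin n, X = {SVtx.y i})
     ∨ (∃ i : Fin n, X = {SVtx.pos i, SVtx.neg i})}

section Aux
variable {n m : ℕ}

instance : Finite (SVtx n) := by
  apply Finite.of_injective (fun v : SVtx n =>
    (match v with
      | .s => Sum.inl 0
      | .t => Sum.inl 1
      | .c => Sum.inl 2
      | .pos i => Sum.inr (i, (0 : Fin 3))
      | .neg i => Sum.inr (i, 1)
      | .y i => Sum.inr (i, 2) : (Fin 3) ⊕ (Fin n × Fin 3)))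
  intro a b h
  cases a <;> cases b <;> simp_all

lemma exists_minSep {V : Type*} [Finite V] (𝒜 : Set (Set V × Set V)) (s t : V) :
    ∀ k (X : Set V), X.ncard ≤ k → IsSeparator 𝒜 s t X →
      ∃ Y, Y ⊆ X ∧ IsMinSeparator 𝒜 s t Y := by
  intro k
  induction k with
  | zero =>
    intro X hk hX
    have hX0 : X = ∅ := (Set.ncard_eq_zero X.toFinite).mp (Nat.le_zero.mp hk)
    subst hX0
    exact ⟨∅, subset_rfl, hX, fun Y hY _ => absurd (Set.empty_subset Y) hY.2⟩
  | succ k ih =>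
    intro X hk hX
    by_cases hmin : ∀ Y, Y ⊂ X → ¬ IsSeparator 𝒜 s t Y
    · exact ⟨X, subset_rfl, hX, hmin⟩
    · push_neg at hmin
      obtain ⟨Y, hYX, hY⟩ := hmin
      obtain ⟨Z, hZY, hZ⟩ := ih Y (by
        have := Set.ncard_lt_ncard hYX X.toFinite
        omega) hY
      exact ⟨Z, hZY.trans hYX.subset, hZ⟩
end Aux
section Aux2
variable {n m : ℕ}

lemma sep_c (φ : CNF3 n m) : IsSeparator (DsepPhi φ) SVtx.s SVtx.t {SVtx.c} := by
  refine ⟨by simp, by simp, fun h => ?_⟩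
  have key : ∀ v, BConn (inducedArcs (DsepPhi φ) (Set.univ \ {SVtx.c})) SVtx.s v →
      v ≠ SVtx.t := by
    intro v h
    induction h with
    | base => simp
    | step A hA hT hv ih =>
      obtain ⟨hmem, hsub1, hsub2⟩ := hA
      simp only [DsepPhi, Set.mem_setOf_eq] at hmem
      rcases hmem with ⟨i, rfl⟩ | ⟨i, rfl⟩ | ⟨i, rfl⟩ | ⟨i, rfl⟩ | ⟨j, rfl⟩ | rfl
      · simp_all
      · simp_all
      · simp_all
      · simp_all
      · simp_all
      · have := hsub1 (Set.mem_insert _ _)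
        simp at this
  exact key _ h rfl

lemma sep_y (φ : CNF3 n m) (i₀ : Fin n) :
    IsSeparator (DsepPhi φ) SVtx.s SVtx.t {SVtx.y i₀} := by
  refine ⟨by simp, by simp, fun h => ?_⟩
  have key : ∀ v, BConn (inducedArcs (DsepPhi φ) (Set.univ \ {SVtx.y i₀})) SVtx.s v →
      v ≠ SVtx.t := by
    intro v h
    induction h with
    | base => simp
    | step A hA hT hv ih =>
      obtain ⟨hmem, hsub1, hsub2⟩ := hA
      simp only [DsepPhi, Set.mem_setOf_eq] at hmem
      rcases hmem with ⟨i, rfl⟩ | ⟨i, rfl⟩ | ⟨i, rfl⟩ | ⟨i, rfl⟩ | ⟨j, rfl⟩ | rfl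
      · simp_all
      · simp_all
      · simp_all
      · simp_all
      · simp_all
      · have := hsub1 (Set.mem_insert_of_mem _ ⟨i₀, rfl⟩)
        simp at this
  exact key _ h rfl

lemma sep_pair (φ : CNF3 n m) (i₀ : Fin n) :
    IsSeparator (DsepPhi φ) SVtx.s SVtx.t {SVtx.pos i₀, SVtx.neg i₀} := by
  refine ⟨by simp, by simp, fun h => ?_⟩
  have key : ∀ v,
      BConn (inducedArcs (DsepPhi φ) (Set.univ \ {SVtx.pos i₀, SVtx.neg i₀})) SVtx.s v →
      v ≠ SVtx.t ∧ v ≠ SVtx.y i₀ := by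
    intro v h
    induction h with
    | base => simp
    | step A hA hT hv ih =>
      obtain ⟨hmem, hsub1, hsub2⟩ := hA
      simp only [DsepPhi, Set.mem_setOf_eq] at hmem
      rcases hmem with ⟨i, rfl⟩ | ⟨i, rfl⟩ | ⟨i, rfl⟩ | ⟨i, rfl⟩ | ⟨j, rfl⟩ | rfl
      · -- arc x_i → y_i
        have h1 := hsub1 rfl
        simp only [Set.mem_diff] at h1
        simp only [Set.mem_singleton_iff] at hv
        subst hv
        constructor
        · simp
        · intro he
          have : i = i₀ := by simpa using he
          subst this
          exact h1.2 (by simp)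
      · have h1 := hsub1 rfl
        simp only [Set.mem_diff] at h1
        simp only [Set.mem_singleton_iff] at hv
        subst hv
        constructor
        · simp
        · intro he
          have : i = i₀ := by simpa using he
          subst this
          exact h1.2 (by simp)
      · simp_all
      · simp_all
      · simp_all
      · -- big arc: y i₀ is a tail
        have := (ih (SVtx.y i₀) (Set.mem_insert_of_mem _ ⟨i₀, rfl⟩)).2
        exact absurd rfl this
  exact (key _ h).1 rfl
section Aux3
variable {n m : ℕ}

/-- The set of false-literal vertices under assignment `α`. -/
def Xass (α : Fin n → Bool) : Set (SVtx n) :=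
  {v | ∃ i, (α i = true ∧ v = SVtx.neg i) ∨ (α i = false ∧ v = SVtx.pos i)}

lemma s_not_mem_Xass (α : Fin n → Bool) : SVtx.s ∉ Xass α := by
  rintro ⟨i, ⟨_, h⟩ | ⟨_, h⟩⟩ <;> simp at h

lemma t_not_mem_Xass (α : Fin n → Bool) : SVtx.t ∉ Xass α := by
  rintro ⟨i, ⟨_, h⟩ | ⟨_, h⟩⟩ <;> simp at h

lemma c_not_mem_Xass (α : Fin n → Bool) : SVtx.c ∉ Xass α := by
  rintro ⟨i, ⟨_, h⟩ | ⟨_, h⟩⟩ <;> simp at h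

lemma y_not_mem_Xass (α : Fin n → Bool) (i : Fin n) : SVtx.y i ∉ Xass α := by
  rintro ⟨i', ⟨_, h⟩ | ⟨_, h⟩⟩ <;> simp at h

lemma pos_mem_Xass (α : Fin n → Bool) (i : Fin n) (h : SVtx.pos i ∈ Xass α) :
    α i = false := by
  obtain ⟨i', ⟨ha, h'⟩ | ⟨ha, h'⟩⟩ := h
  · simp at h'
  · obtain rfl : i = i' := by simpa using h'
    exact ha

lemma neg_mem_Xass (α : Fin n → Bool) (i : Fin n) (h : SVtx.neg i ∈ Xass α) :
    α i = true := by
  obtain ⟨i', ⟨ha, h'⟩ | ⟨ha, h'⟩⟩ := h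
  · obtain rfl : i = i' := by simpa using h'
    exact ha
  · simp at h'

lemma barVtx_true_mem_Xass (α : Fin n → Bool) (ℓ : Fin n × Bool)
    (h : α ℓ.1 = ℓ.2) : barVtx ℓ ∈ Xass α := by
  obtain ⟨i, b⟩ := ℓ
  cases b
  · exact ⟨i, Or.inr ⟨h, rfl⟩⟩
  · exact ⟨i, Or.inl ⟨h, rfl⟩⟩

lemma sep_Xass (φ : CNF3 n m) (α : Fin n → Bool) (hα : Satisfies α φ) :
    IsSeparator (DsepPhi φ) SVtx.s SVtx.t (Xass α) := by
  refine ⟨s_not_mem_Xass α, t_not_mem_Xass α, fun h => ?_⟩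
  have key : ∀ v, BConn (inducedArcs (DsepPhi φ) (Set.univ \ Xass α)) SVtx.s v →
      v ≠ SVtx.t ∧ v ≠ SVtx.c := by
    intro v h
    induction h with
    | base => simp
    | step A hA hT hv ih =>
      obtain ⟨hmem, hsub1, hsub2⟩ := hA
      simp only [DsepPhi, Set.mem_setOf_eq] at hmem
      rcases hmem with ⟨i, rfl⟩ | ⟨i, rfl⟩ | ⟨i, rfl⟩ | ⟨i, rfl⟩ | ⟨j, rfl⟩ | rfl
      · simp_all
      · simp_all
      · simp_all
      · simp_all
      · -- clause arc: some tail lies in Xass α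
        obtain ⟨k, hk⟩ := hα j
        have hmemX : barVtx (φ j k) ∈ Xass α := barVtx_true_mem_Xass α _ hk
        have hmemT : barVtx (φ j k) ∈
            ({barVtx (φ j 0), barVtx (φ j 1), barVtx (φ j 2)} : Set (SVtx n)) := by
          fin_cases k <;> simp
        exact absurd hmemX (hsub1 hmemT).2
      · exact absurd (ih SVtx.c (Set.mem_insert _ _)).2 (by simp)
  exact (key _ h).1 rfl

lemma mem_inducedArcs {V : Type*} {𝒜 : Set (Set V × Set V)} {U : Set V}
    {A : Set V × Set V} (h1 : A ∈ 𝒜) (h2 : A.1 ⊆ U) (h3 : A.2 ⊆ U) :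
    A ∈ inducedArcs 𝒜 U := ⟨h1, h2, h3⟩

lemma mem_DsepPhi {φ : CNF3 n m} {A : Set (SVtx n) × Set (SVtx n)}
    (h : (∃ i : Fin n, A = ({SVtx.pos i}, {SVtx.y i}))
     ∨ (∃ i : Fin n, A = ({SVtx.neg i}, {SVtx.y i}))
     ∨ (∃ i : Fin n, A = ({SVtx.s}, {SVtx.pos i}))
     ∨ (∃ i : Fin n, A = ({SVtx.s}, {SVtx.neg i}))
     ∨ (∃ j : Fin m,
          A = ({barVtx (φ j 0), barVtx (φ j 1), barVtx (φ j 2)}, {SVtx.c}))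
     ∨ A = (insert SVtx.c {v | ∃ i : Fin n, v = SVtx.y i}, {SVtx.t})) :
    A ∈ DsepPhi φ := h

lemma reach_t (φ : CNF3 n m) (X : Set (SVtx n))
    (hs : SVtx.s ∉ X) (ht : SVtx.t ∉ X) (hc : SVtx.c ∉ X)
    (hy : ∀ i, SVtx.y i ∉ X) (hpair : ∀ i, SVtx.pos i ∉ X ∨ SVtx.neg i ∉ X)
    (j : Fin m) (hj : ∀ k, barVtx (φ j k) ∉ X) :
    BConn (inducedArcs (DsepPhi φ) (Set.univ \ X)) SVtx.s SVtx.t := by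
  set U := Set.univ \ X with hU
  have hmemU : ∀ v : SVtx n, v ∉ X → v ∈ U := fun v hv => ⟨trivial, hv⟩
  have hpos : ∀ i, SVtx.pos i ∉ X →
      BConn (inducedArcs (DsepPhi φ) U) SVtx.s (SVtx.pos i) := by
    intro i hi
    refine BConn.step ({SVtx.s}, {SVtx.pos i}) (mem_inducedArcs (mem_DsepPhi ?_) ?_ ?_) ?_ rfl
    · exact Or.inr (Or.inr (Or.inl ⟨i, rfl⟩))
    · intro u hu; simp only [Set.mem_singleton_iff] at hu; subst hu; exact hmemU _ hs
    · intro u hu; simp only [Set.mem_singleton_iff] at hu; subst hu; exact hmemU _ hi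
    · intro u hu; simp only [Set.mem_singleton_iff] at hu; subst hu; exact BConn.base
  have hneg : ∀ i, SVtx.neg i ∉ X →
      BConn (inducedArcs (DsepPhi φ) U) SVtx.s (SVtx.neg i) := by
    intro i hi
    refine BConn.step ({SVtx.s}, {SVtx.neg i}) (mem_inducedArcs (mem_DsepPhi ?_) ?_ ?_) ?_ rfl
    · exact Or.inr (Or.inr (Or.inr (Or.inl ⟨i, rfl⟩)))
    · intro u hu; simp only [Set.mem_singleton_iff] at hu; subst hu; exact hmemU _ hs
    · intro u hu; simp only [Set.mem_singleton_iff] at hu; subst hu; exact hmemU _ hi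
    · intro u hu; simp only [Set.mem_singleton_iff] at hu; subst hu; exact BConn.base
  have hbar : ∀ ℓ : Fin n × Bool, barVtx ℓ ∉ X →
      BConn (inducedArcs (DsepPhi φ) U) SVtx.s (barVtx ℓ) := by
    rintro ⟨i, b⟩ hℓ
    cases b
    · simp only [barVtx] at hℓ ⊢; exact hpos i hℓ
    · simp only [barVtx] at hℓ ⊢; exact hneg i hℓ
  have hyr : ∀ i, BConn (inducedArcs (DsepPhi φ) U) SVtx.s (SVtx.y i) := by
    intro i
    rcases hpair i with hi | hi
    · refine BConn.step ({SVtx.pos i}, {SVtx.y i}) (mem_inducedArcs (mem_DsepPhi ?_) ?_ ?_) ?_ rfl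
      · exact Or.inl ⟨i, rfl⟩
      · intro u hu; simp only [Set.mem_singleton_iff] at hu; subst hu; exact hmemU _ hi
      · intro u hu; simp only [Set.mem_singleton_iff] at hu; subst hu; exact hmemU _ (hy i)
      · intro u hu; simp only [Set.mem_singleton_iff] at hu; subst hu; exact hpos i hi
    · refine BConn.step ({SVtx.neg i}, {SVtx.y i}) (mem_inducedArcs (mem_DsepPhi ?_) ?_ ?_) ?_ rfl
      · exact Or.inr (Or.inl ⟨i, rfl⟩)
      · intro u hu; simp only [Set.mem_singleton_iff] at hu; subst hu; exact hmemU _ hi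
      · intro u hu; simp only [Set.mem_singleton_iff] at hu; subst hu; exact hmemU _ (hy i)
      · intro u hu; simp only [Set.mem_singleton_iff] at hu; subst hu; exact hneg i hi
  have hcr : BConn (inducedArcs (DsepPhi φ) U) SVtx.s SVtx.c := by
    refine BConn.step ({barVtx (φ j 0), barVtx (φ j 1), barVtx (φ j 2)}, {SVtx.c})
      (mem_inducedArcs (mem_DsepPhi ?_) ?_ ?_) ?_ rfl
    · exact Or.inr (Or.inr (Or.inr (Or.inr (Or.inl ⟨j, rfl⟩))))
    · intro u hu
      rcases hu with rfl | rfl | rfl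
      exacts [hmemU _ (hj 0), hmemU _ (hj 1), hmemU _ (hj 2)]
    · intro u hu; simp only [Set.mem_singleton_iff] at hu; subst hu; exact hmemU _ hc
    · intro u hu
      rcases hu with rfl | rfl | rfl
      exacts [hbar _ (hj 0), hbar _ (hj 1), hbar _ (hj 2)]
  refine BConn.step (insert SVtx.c {v | ∃ i : Fin n, v = SVtx.y i}, {SVtx.t})
    (mem_inducedArcs (mem_DsepPhi ?_) ?_ ?_) ?_ rfl
  · exact Or.inr (Or.inr (Or.inr (Or.inr (Or.inr rfl))))
  · rintro u (rfl | ⟨i, rfl⟩)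
    exacts [hmemU _ hc, hmemU _ (hy i)]
  · intro u hu; simp only [Set.mem_singleton_iff] at hu; subst hu; exact hmemU _ ht
  · rintro u (rfl | ⟨i, rfl⟩)
    exacts [hcr, hyr i]
end Aux3
/-- `φ` has a satisfying assignment iff `D_φ` has a minimal `s`-`t` separator
not belonging to `𝒳(φ)`. -/
theorem sat_iff_another_minimal_separator {n m : ℕ} (φ : CNF3 n m) :
    (∃ α : Fin n → Bool, Satisfies α φ) ↔
      ∃ X : Set (SVtx n), IsMinSeparator (DsepPhi φ) SVtx.s SVtx.t X ∧ X ∉ Xcal n := by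
  constructor
  · rintro ⟨α, hα⟩
    obtain ⟨Y, hYX, hY⟩ :=
      exists_minSep (DsepPhi φ) SVtx.s SVtx.t (Xass α).ncard (Xass α) le_rfl
        (sep_Xass φ α hα)
    refine ⟨Y, hY, ?_⟩
    rintro (rfl | ⟨i, rfl⟩ | ⟨i, rfl⟩)
    · exact c_not_mem_Xass α (hYX rfl)
    · exact y_not_mem_Xass α i (hYX rfl)
    · have h1 : α i = false := pos_mem_Xass α i (hYX (by simp))
      have h2 : α i = true := neg_mem_Xass α i (hYX (by simp))
      simp [h1] at h2
  · rintro ⟨X, ⟨hsep, hmin⟩, hX⟩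
    classical
    have hc : SVtx.c ∉ X := by
      intro hcX
      have hsub : ({SVtx.c} : Set (SVtx n)) ⊆ X := by simpa using hcX
      rcases hsub.ssubset_or_eq with hss | heq
      · exact hmin _ hss (sep_c φ)
      · exact hX (Or.inl heq.symm)
    have hy : ∀ i, SVtx.y i ∉ X := by
      intro i hyX
      have hsub : ({SVtx.y i} : Set (SVtx n)) ⊆ X := by simpa using hyX
      rcases hsub.ssubset_or_eq with hss | heq
      · exact hmin _ hss (sep_y φ i)
      · exact hX (Or.inr (Or.inl ⟨i, heq.symm⟩))
    have hpairand : ∀ i, ¬ (SVtx.pos i ∈ X ∧ SVtx.neg i ∈ X) := by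
      rintro i ⟨h1, h2⟩
      have hsub : ({SVtx.pos i, SVtx.neg i} : Set (SVtx n)) ⊆ X := by
        rintro u (rfl | rfl) <;> assumption
      rcases hsub.ssubset_or_eq with hss | heq
      · exact hmin _ hss (sep_pair φ i)
      · exact hX (Or.inr (Or.inr ⟨i, heq.symm⟩))
    have hpair : ∀ i, SVtx.pos i ∉ X ∨ SVtx.neg i ∉ X := by
      intro i
      by_cases h : SVtx.pos i ∈ X
      · exact Or.inr fun h2 => hpairand i ⟨h, h2⟩
      · exact Or.inl h
    have hclause : ∀ j, ∃ k, barVtx (φ j k) ∈ X := by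
      intro j
      by_contra h
      push_neg at h
      exact hsep.2.2 (reach_t φ X hsep.1 hsep.2.1 hc hy hpair j h)
    refine ⟨fun i => if SVtx.pos i ∈ X then false else true, fun j => ?_⟩
    obtain ⟨k, hk⟩ := hclause j
    refine ⟨k, ?_⟩
    rcases hφ : φ j k with ⟨i, b⟩
    rw [hφ] at hk

    cases b
    · simp only [barVtx, Bool.cond_false, Bool.cond_true] at hk
      simp [hk]
    · simp only [barVtx, Bool.cond_false, Bool.cond_true] at hk
      have hp : SVtx.pos i ∉ X := fun h => hpairand i ⟨h, hk⟩
      simp [hp]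
end Aux2
end

section
/- Let D = (V, 𝒜) be a B-hypergraph, let S, T ⊆ V, let P_ST be an S-T hyperpath in D with an ordering (A_1, …, A_k) satisfying T(A_i) ⊆ S ∪ ⋃_{1 ≤ j ≤ i−1} H(A_j), and write A_k = (T_k, {h_k}). Let f be the map on hyperarcs B ∈ 𝒜 with H(B) ≠ {h_k} defined by f(B) = B if h_k ∉ T(B) and f(B) = ((T(B) \ {h_k}) ∪ T_k, H(B)) otherwise; let D′ = (V \ {h_k}, ℬ) where ℬ = { f(B) : B ∈ 𝒜, H(B) ≠ {h_k} } (as a multiset, so that f is a bijection onto ℬ), and let T′ = (T ∪ T_k) \ (S ∪ {h_k}). Then the map g sending Q ↦ { f(B) : B ∈ Q \ {A_k} } is a bijection between the set of S-T hyperpaths of D that contain A_k and the set of S-T′ hyperpaths of D′. -/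
/-!
A `B`-hypergraph (parallel hyperarcs allowed) on a vertex type `V` is modelled by an
arc-index type `A` together with a tail map `tl : A → Set V`, a head map `hd : A → V`
(every hyperarc is a `B`-hyperarc, i.e. its head set is the singleton `{hd a}`), and a set
`𝒜 : Set A` of hyperarcs.  Disjointness of tails and heads is the condition
`∀ a ∈ 𝒜, hd a ∉ tl a`.
-/

/-- B-connection from a set `S` of vertices in the edge-induced subhypergraph `D[P]`:
every vertex of `S` is B-connected from `S`, and if all tail vertices of an arc `a ∈ P`
are B-connected from `S`, then its head `hd a` is B-connected from `S`. -/
inductive BConnB {V A : Type*} (tl : A → Set V) (hd : A → V) (P : Set A) (S : Set V) :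
    V → Prop
  | base {v : V} (hv : v ∈ S) : BConnB tl hd P S v
  | step (a : A) (ha : a ∈ P) (hT : ∀ u ∈ tl a, BConnB tl hd P S u) :
      BConnB tl hd P S (hd a)

/-- A set of hyperarcs `P ⊆ 𝒜` is an `S`-`T` hyperpath if every vertex of `T` is
B-connected from `S` in `D[P]` and `P` is inclusion-wise minimal with this property. -/
def IsSTHyp {V A : Type*} (tl : A → Set V) (hd : A → V) (𝒜 : Set A) (S T : Set V)
    (P : Set A) : Prop :=
  P ⊆ 𝒜 ∧ (∀ v ∈ T, BConnB tl hd P S v) ∧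
    ∀ Q, Q ⊂ P → ¬ (∀ v ∈ T, BConnB tl hd Q S v)

/-- The ordering condition on a list `(A_1, …, A_k)` of hyperarcs:
`T(A_i) ⊆ S ∪ ⋃_{j < i} H(A_j)` for every `i`. -/
def GoodOrder {V A : Type*} (tl : A → Set V) (hd : A → V) (S : Set V) (l : List A) : Prop :=
  ∀ i : Fin l.length,
    tl (l.get i) ⊆ S ∪ {v | ∃ j : Fin l.length, j < i ∧ v = hd (l.get j)}

/-- The vertex set of the edge-induced subhypergraph `D[P]`. -/
def dverts {V A : Type*} (tl : A → Set V) (hd : A → V) (P : Set A) : Set V :=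
  {v | ∃ a ∈ P, v ∈ tl a ∨ v = hd a}

open Classical in
/-- The modified tail map of the branching construction: for an arc `B` with
`H(B) ≠ {h_k}`, `f(B) = B` if `h_k ∉ T(B)`, and otherwise
`f(B) = ((T(B) \ {h_k}) ∪ T_k, H(B))`.  Since arcs are indexed, `f` is the identity on
indices and only the tail map changes; `f` is thus a bijection onto the (multi)set `ℬ`. -/
noncomputable def newTl {V A : Type*} (tl : A → Set V) (hk : V) (Tk : Set V) :
    A → Set V :=
  fun b => if hk ∈ tl b then (tl b \ {hk}) ∪ Tk else tl b

section Lemmas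
variable {V A : Type*} {tl : A → Set V} {hd : A → V} {S : Set V}

lemma bconn_mono {P P' : Set A} (h : P ⊆ P') {v : V}
    (hv : BConnB tl hd P S v) : BConnB tl hd P' S v := by
  induction hv with
  | base hv => exact .base hv
  | step a ha hT ih => exact .step a (h ha) ih

lemma bconn_range {P : Set A} {v : V} (h : BConnB tl hd P S v) :
    v ∈ S ∨ ∃ a ∈ P, hd a = v := by
  cases h with
  | base hv => exact Or.inl hv
  | step a ha hT => exact Or.inr ⟨a, ha, rfl⟩

lemma bconn_drop {Q : Set A} {a : A}
    (hha : BConnB tl hd (Q \ {a}) S (hd a)) {x : V}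
    (hx : BConnB tl hd Q S x) : BConnB tl hd (Q \ {a}) S x := by
  induction hx with
  | base hv => exact .base hv
  | step c hc hT ih =>
    by_cases hca : c = a
    · subst hca; exact hha
    · exact .step c ⟨hc, hca⟩ ih

lemma bconn_cases {Q : Set A} {a : A} {x : V} (hx : BConnB tl hd Q S x) :
    (∀ u ∈ tl a, BConnB tl hd (Q \ {a}) S u) ∨ BConnB tl hd (Q \ {a}) S x := by
  induction hx with
  | base hv => exact Or.inr (.base hv)
  | step c hc hT ih =>
    by_cases hta : ∀ u ∈ tl a, BConnB tl hd (Q \ {a}) S u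
    · exact Or.inl hta
    · have hW : ∀ u ∈ tl c, BConnB tl hd (Q \ {a}) S u := by
        intro u hu
        rcases ih u hu with h | h
        · exact absurd h hta
        · exact h
      by_cases hca : c = a
      · subst hca; exact Or.inl hW
      · exact Or.inr (.step c ⟨hc, hca⟩ hW)

lemma diff_ssub {Q : Set A} {a : A} (ha : a ∈ Q) : Q \ {a} ⊂ Q := by
  constructor
  · exact Set.diff_subset
  · intro h
    exact (h ha).2 rfl

lemma head_notmem_S {𝒜 : Set A} {T : Set V} {Q : Set A} {a : A}
    (hQ : IsSTHyp tl hd 𝒜 S T Q) (ha : a ∈ Q) : hd a ∉ S := by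
  intro hs
  exact hQ.2.2 (Q \ {a}) (diff_ssub ha)
    (fun v hv => bconn_drop (.base hs) (hQ.2.1 v hv))

lemma tl_subset_drop {𝒜 : Set A} {T : Set V} {Q : Set A} {a : A}
    (hQ : IsSTHyp tl hd 𝒜 S T Q) (ha : a ∈ Q) :
    ∀ u ∈ tl a, BConnB tl hd (Q \ {a}) S u := by
  by_contra hta
  exact hQ.2.2 (Q \ {a}) (diff_ssub ha)
    (fun v hv => by
      rcases bconn_cases (a := a) (hQ.2.1 v hv) with h | h
      · exact absurd h hta
      · exact h)

lemma heads_distinct {𝒜 : Set A} {T : Set V} {Q : Set A} {a b : A}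
    (hQ : IsSTHyp tl hd 𝒜 S T Q) (ha : a ∈ Q) (hb : b ∈ Q) (hab : a ≠ b) :
    hd a ≠ hd b := by
  intro heq
  set R : Set A := (Q \ {a}) \ {b} with hR
  set W : Set V := setOf (BConnB tl hd R S) with hW
  have claim : ∀ {x : V}, BConnB tl hd Q S x →
      (∀ u ∈ tl a, u ∈ W) ∨ (∀ u ∈ tl b, u ∈ W) ∨ x ∈ W := by
    intro x hx
    induction hx with
    | base hv => exact Or.inr (Or.inr (.base hv))
    | step c hc hT ih =>
      by_cases h1 : ∀ u ∈ tl a, u ∈ W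
      · exact Or.inl h1
      by_cases h2 : ∀ u ∈ tl b, u ∈ W
      · exact Or.inr (Or.inl h2)
      have hWc : ∀ u ∈ tl c, u ∈ W := by
        intro u hu
        rcases ih u hu with h | h | h
        · exact absurd h h1
        · exact absurd h h2
        · exact h
      by_cases hca : c = a
      · subst hca; exact absurd hWc h1
      by_cases hcb : c = b
      · subst hcb; exact absurd hWc h2
      · exact Or.inr (Or.inr (BConnB.step c ⟨⟨hc, hca⟩, hcb⟩ hWc))
  have hsub1 : R ⊆ Q \ {b} := fun c hc => ⟨hc.1.1, hc.2⟩
  have hsub2 : R ⊆ Q \ {a} := fun c hc => hc.1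
  by_cases h1 : ∀ u ∈ tl a, u ∈ W
  · have hda : BConnB tl hd (Q \ {b}) S (hd b) := heq ▸
      (BConnB.step a ⟨ha, hab⟩ (fun u hu => bconn_mono hsub1 (h1 u hu)))
    exact hQ.2.2 (Q \ {b}) (diff_ssub hb)
      (fun v hv => bconn_drop hda (hQ.2.1 v hv))
  by_cases h2 : ∀ u ∈ tl b, u ∈ W
  · have hdb : BConnB tl hd (Q \ {a}) S (hd a) := heq ▸
      (BConnB.step b ⟨hb, Ne.symm hab⟩ (fun u hu => bconn_mono hsub2 (h2 u hu)))
    exact hQ.2.2 (Q \ {a}) (diff_ssub ha)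
      (fun v hv => bconn_drop hdb (hQ.2.1 v hv))
  · exact hQ.2.2 (Q \ {a}) (diff_ssub ha)
      (fun v hv => by
        rcases claim (hQ.2.1 v hv) with h | h | h
        · exact absurd h h1
        · exact absurd h h2
        · exact bconn_mono hsub2 h)

end Lemmas

section Transfer
variable {V A : Type*} {tl : A → Set V} {hd : A → V} {S : Set V}

lemma newTl_pos {hk : V} {Tk : Set V} {c : A} (h : hk ∈ tl c) :
    newTl tl hk Tk c = (tl c \ {hk}) ∪ Tk := by
  simp only [newTl, if_pos h]

lemma newTl_neg {hk : V} {Tk : Set V} {c : A} (h : hk ∉ tl c) :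
    newTl tl hk Tk c = tl c := by
  simp only [newTl, if_neg h]

/-- trivial transfer when no arc can produce `hk` -/
lemma transfer_triv {hk : V} {Tk : Set V} {R : Set A} (h2 : hk ∉ S)
    (h1 : ∀ c ∈ R, hd c ≠ hk) {x : V} (hx : BConnB tl hd R S x) :
    BConnB (newTl tl hk Tk) hd R S x := by
  induction hx with
  | base hv => exact .base hv
  | step c hc hT ih =>
    have hkc : hk ∉ tl c := by
      intro hkk
      rcases bconn_range (hT hk hkk) with h | ⟨b, hb, hb2⟩
      · exact h2 h
      · exact h1 b hb hb2
    exact .step c hc (by rw [newTl_neg hkc]; exact ih)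

/-- forward transfer -/
lemma transfer_fwd {a : A} {R : Set A}
    (h1 : ∀ c ∈ R, c ≠ a → hd c ≠ hd a) (h2 : hd a ∉ S) (h3 : hd a ∉ tl a)
    {x : V} (hx : BConnB tl hd R S x) :
    BConnB (newTl tl (hd a) (tl a)) hd (R \ {a}) S x ∨
      (x = hd a ∧ ∀ w ∈ tl a, BConnB (newTl tl (hd a) (tl a)) hd (R \ {a}) S w) := by
  induction hx with
  | base hv => exact Or.inl (.base hv)
  | step c hc hT ih =>
    by_cases hca : c = a
    · subst hca
      refine Or.inr ⟨rfl, fun w hw => ?_⟩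
      rcases ih w hw with h | ⟨rfl, _⟩
      · exact h
      · exact absurd hw h3
    · left
      have hcR : c ∈ R \ {a} := ⟨hc, hca⟩
      by_cases hkc : hd a ∈ tl c
      · have hTk : ∀ w ∈ tl a, BConnB (newTl tl (hd a) (tl a)) hd (R \ {a}) S w := by
          rcases ih (hd a) hkc with h | ⟨_, h⟩
          · exfalso
            rcases bconn_range h with h' | ⟨b, hb, hb2⟩
            · exact h2 h'
            · exact h1 b hb.1 hb.2 hb2
          · exact h
        refine BConnB.step c hcR ?_
        rw [newTl_pos hkc]
        rintro u (⟨hu1, hu2⟩ | hu)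
        · rcases ih u hu1 with h | ⟨rfl, _⟩
          · exact h
          · exact absurd rfl hu2
        · exact hTk u hu
      · refine BConnB.step c hcR ?_
        rw [newTl_neg hkc]
        intro u hu
        rcases ih u hu with h | ⟨rfl, _⟩
        · exact h
        · exact absurd hu hkc

/-- backward transfer -/
lemma transfer_bwd {a : A} {R' : Set A} {x : V}
    (hx : BConnB (newTl tl (hd a) (tl a)) hd R' S x) :
    BConnB tl hd (insert a R') S x := by
  induction hx with
  | base hv => exact .base hv
  | step c hc hT ih =>
    have hcm : c ∈ insert a R' := Set.mem_insert_iff.mpr (Or.inr hc)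
    by_cases hkc : hd a ∈ tl c
    · have htk : ∀ w ∈ tl a, BConnB tl hd (insert a R') S w := by
        intro w hw
        exact ih w (by rw [newTl_pos hkc]; exact Or.inr hw)
      have hhk : BConnB tl hd (insert a R') S (hd a) :=
        .step a (Set.mem_insert _ _) htk
      refine BConnB.step c hcm ?_
      intro u hu
      by_cases hu2 : u = hd a
      · subst hu2; exact hhk
      · exact ih u (by rw [newTl_pos hkc]; exact Or.inl ⟨hu, hu2⟩)
    · refine BConnB.step c hcm ?_
      intro u hu
      exact ih u (by rw [newTl_neg hkc]; exact hu)

end Transfer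

/-- let `P_ST` be an `S`-`T` hyperpath with an ordering `(A_1, …, A_k)`
satisfying `T(A_i) ⊆ S ∪ ⋃_{j<i} H(A_j)`, and `A_k = (T_k, {h_k})` its last arc.  With
`D′ = (V \ {h_k}, ℬ)` (where `ℬ` consists of the arcs `f(B)` for `B ∈ 𝒜`, `H(B) ≠ {h_k}`)
and `T′ = (T ∪ T_k) \ (S ∪ {h_k})`, the map `g : Q ↦ {f(B) : B ∈ Q \ {A_k}}` is a
bijection between the `S`-`T` hyperpaths of `D` containing `A_k` and the `S`-`T′`
hyperpaths of `D′`. -/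
theorem branching_bijection {V A : Type*} (tl : A → Set V) (hd : A → V) (𝒜 : Set A)
    (S T : Set V) (hdisj : ∀ a ∈ 𝒜, hd a ∉ tl a)
    (P : Set A) (hP : IsSTHyp tl hd 𝒜 S T P)
    (l : List A) (hne : l ≠ []) (hnd : l.Nodup) (hset : {a | a ∈ l} = P)
    (hord : GoodOrder tl hd S l)
    (ak : A) (hak : ak = l.getLast hne) :
    Set.BijOn (fun Q => Q \ {ak})
      {Q | IsSTHyp tl hd 𝒜 S T Q ∧ ak ∈ Q}
      {Q' | IsSTHyp (newTl tl (hd ak) (tl ak)) hd {b ∈ 𝒜 | hd b ≠ hd ak} S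
        ((T ∪ tl ak) \ (S ∪ {hd ak})) Q'} := by
  have hlpos : 0 < l.length := List.length_pos_iff.mpr hne
  have hlast : l.length - 1 < l.length := Nat.sub_lt hlpos Nat.one_pos
  have hakl : ak = l.get ⟨l.length - 1, hlast⟩ := by
    rw [hak, ← List.get_length_sub_one hlast]
  have hmemP : ∀ a, a ∈ l ↔ a ∈ P := fun a => by rw [← hset]; rfl
  have hakP : ak ∈ P := (hmemP ak).mp (hak ▸ List.getLast_mem hne)
  have hak𝒜 : ak ∈ 𝒜 := hP.1 hakP
  have h3 : hd ak ∉ tl ak := hdisj ak hak𝒜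
  have hkS : hd ak ∉ S := head_notmem_S hP hakP
  -- every non-last arc's head is connected in P \ {ak}
  have key : ∀ n : ℕ, ∀ (hn : n < l.length), n < l.length - 1 →
      BConnB tl hd (P \ {ak}) S (hd (l.get ⟨n, hn⟩)) := by
    intro n
    induction n using Nat.strong_induction_on with
    | _ n ih =>
      intro hn hn1
      have harc : l.get ⟨n, hn⟩ ∈ P \ {ak} := by
        refine ⟨(hmemP _).mp (List.get_mem l ⟨n, hn⟩), ?_⟩
        intro hcon
        have : (⟨n, hn⟩ : Fin l.length) = ⟨l.length - 1, hlast⟩ :=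
          (List.nodup_iff_injective_get.mp hnd) (by
            have hcon' : l.get ⟨n, hn⟩ = ak := hcon
            rw [hakl] at hcon'; exact hcon')
        simp only [Fin.mk.injEq] at this
        omega
      refine BConnB.step _ harc ?_
      intro u hu
      rcases hord ⟨n, hn⟩ hu with h | ⟨j, hj, rfl⟩
      · exact .base h
      · exact ih j.val hj j.isLt (by omega)
  -- the head of the last arc belongs to T
  have hkT : hd ak ∈ T := by
    by_contra hkt
    refine hP.2.2 (P \ {ak}) (diff_ssub hakP) ?_
    intro v hv
    rcases bconn_range (hP.2.1 v hv) with h | ⟨a, ha, rfl⟩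
    · exact .base h
    · rcases List.mem_iff_get.mp ((hmemP a).mpr ha) with ⟨⟨n, hn⟩, rfl⟩
      by_cases hlst : n = l.length - 1
      · subst hlst
        rw [← hakl] at hv ⊢
        exact absurd hv hkt
      · exact key n hn (by omega)

  set tl' := newTl tl (hd ak) (tl ak) with htl'
  set 𝒜' : Set A := {b ∈ 𝒜 | hd b ≠ hd ak} with h𝒜'
  set T' : Set V := (T ∪ tl ak) \ (S ∪ {hd ak}) with hT'
  refine ⟨?_, ?_, ?_⟩
  · -- MapsTo
    rintro Q ⟨hQ, hakQ⟩
    have h1Q : ∀ c ∈ Q, c ≠ ak → hd c ≠ hd ak :=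
      fun c hc hcne => heads_distinct hQ hc hakQ hcne
    refine ⟨?_, ?_, ?_⟩
    · rintro b ⟨hb, hbne⟩
      exact ⟨hQ.1 hb, h1Q b hb hbne⟩
    · rintro v ⟨hv1, hv2⟩
      have hvS : v ∉ S := fun h => hv2 (Or.inl h)
      have hvhk : v ≠ hd ak := fun h => hv2 (Or.inr h)
      rcases hv1 with hv | hv
      · rcases transfer_fwd h1Q hkS h3 (hQ.2.1 v hv) with h | ⟨rfl, _⟩
        · exact h
        · exact absurd rfl hvhk
      · exact transfer_triv hkS (fun c hc => h1Q c hc.1 hc.2)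
          (tl_subset_drop hQ hakQ v hv)
    · intro R hR hcon
      have hTk' : ∀ w ∈ tl ak, BConnB tl hd (insert ak R) S w := by
        intro w hw
        by_cases hwS : w ∈ S
        · exact .base hwS
        · refine transfer_bwd (hcon w ⟨Or.inr hw, ?_⟩)
          rintro (h | h)
          · exact hwS h
          · exact h3 (h ▸ hw)
      have hhk : BConnB tl hd (insert ak R) S (hd ak) :=
        .step ak (Set.mem_insert _ _) hTk'
      refine hQ.2.2 (insert ak R) ?_ ?_
      · constructor
        · intro b hb
          rcases Set.mem_insert_iff.mp hb with rfl | hb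
          · exact hakQ
          · exact (hR.1 hb).1
        · intro hsub
          obtain ⟨b, hbQD, hbR⟩ := Set.exists_of_ssubset hR
          exact hbR (by
            rcases Set.mem_insert_iff.mp (hsub hbQD.1) with h | h
            · exact absurd h hbQD.2
            · exact h)
      · intro v hv
        by_cases hvS : v ∈ S
        · exact .base hvS
        by_cases hvhk : v = hd ak
        · exact hvhk ▸ hhk
        · refine transfer_bwd (hcon v ⟨Or.inl hv, ?_⟩)
          rintro (h | h)
          · exact hvS h
          · exact hvhk h
  · -- InjOn
    rintro Q1 ⟨hQ1, hak1⟩ Q2 ⟨hQ2, hak2⟩ heq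
    have heq' : Q1 \ {ak} = Q2 \ {ak} := heq
    ext x
    by_cases hx : x = ak
    · subst hx; simp [hak1, hak2]
    · constructor
      · intro h
        exact (Set.ext_iff.mp heq' x).mp ⟨h, hx⟩ |>.1
      · intro h
        exact (Set.ext_iff.mp heq' x).mpr ⟨h, hx⟩ |>.1
  · -- SurjOn
    rintro Q' hQ'
    have hQ' : IsSTHyp tl' hd 𝒜' S T' Q' := hQ'
    have hakQ' : ak ∉ Q' := fun h => (hQ'.1 h).2 rfl
    have hcommon : ∀ w ∈ T', BConnB tl hd (insert ak Q') S w :=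
      fun w hw => transfer_bwd (hQ'.2.1 w hw)
    have hTk : ∀ w ∈ tl ak, BConnB tl hd (insert ak Q') S w := by
      intro w hw
      by_cases hwS : w ∈ S
      · exact .base hwS
      · refine hcommon w ⟨Or.inr hw, ?_⟩
        rintro (h | h)
        · exact hwS h
        · exact h3 (h ▸ hw)
    have hhk : BConnB tl hd (insert ak Q') S (hd ak) :=
      .step ak (Set.mem_insert _ _) hTk
    rw [Set.mem_image]
    refine ⟨insert ak Q', ⟨⟨?_, ?_, ?_⟩, Set.mem_insert _ _⟩, ?_⟩
    · intro b hb
      rcases Set.mem_insert_iff.mp hb with rfl | hb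
      · exact hak𝒜
      · exact (hQ'.1 hb).1
    · intro v hv
      by_cases hvS : v ∈ S
      · exact .base hvS
      by_cases hvhk : v = hd ak
      · exact hvhk ▸ hhk
      · refine hcommon v ⟨Or.inl hv, ?_⟩
        rintro (h | h)
        · exact hvS h
        · exact hvhk h
    · -- minimality of insert ak Q'
      intro R hR hcon
      by_cases hakR : ak ∈ R
      · have h1R : ∀ c ∈ R, c ≠ ak → hd c ≠ hd ak := by
          intro c hc hcne
          rcases Set.mem_insert_iff.mp (hR.1 hc) with rfl | hcQ
          · exact absurd rfl hcne
          · exact (hQ'.1 hcQ).2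
        refine hQ'.2.2 (R \ {ak}) ?_ ?_
        · constructor
          · intro b hb
            rcases Set.mem_insert_iff.mp (hR.1 hb.1) with rfl | h
            · exact absurd rfl hb.2
            · exact h
          · intro hsub
            obtain ⟨b, hbQ, hbR⟩ := Set.exists_of_ssubset hR
            have hbak : b ≠ ak := fun h => hbR (h ▸ hakR)
            rcases Set.mem_insert_iff.mp hbQ with rfl | hbQ'
            · exact absurd rfl hbak
            · exact hbR (hsub hbQ').1
        · rintro v ⟨hv1, hv2⟩
          have hvS : v ∉ S := fun h => hv2 (Or.inl h)
          have hvhk : v ≠ hd ak := fun h => hv2 (Or.inr h)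
          rcases hv1 with hv | hv
          · rcases transfer_fwd h1R hkS h3 (hcon v hv) with h | ⟨rfl, _⟩
            · exact h
            · exact absurd rfl hvhk
          · rcases transfer_fwd h1R hkS h3 (hcon (hd ak) hkT) with h | ⟨_, h⟩
            · exfalso
              rcases bconn_range h with h' | ⟨b, hb, hb2⟩
              · exact hkS h'
              · exact h1R b hb.1 hb.2 hb2
            · exact h v hv
      · exfalso
        rcases bconn_range (hcon (hd ak) hkT) with h | ⟨b, hb, hb2⟩
        · exact hkS h
        · rcases Set.mem_insert_iff.mp (hR.1 hb) with rfl | hbQ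
          · exact hakR hb
          · exact (hQ'.1 hbQ).2 hb2
    · show insert ak Q' \ {ak} = Q'
      exact Set.insert_diff_self_of_notMem hakQ'
end
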